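/- Assume ℙ(Y=1,S=s) > 0 and set b_s := ℙ(S=s) and m_s := E_{X|S=s}[η(X,s)] for s ∈ {0,1}. For every λ ∈ ℝ, the classifier g*_λ defined by g*_λ(x,1) := 1{1 ≤ η(x,1)·(2 − λ/ℙ(Y=1,S=1))} and g*_λ(x,0) := 1{1 ≤ η(x,0)·(2 + λ/ℙ(Y=1,S=0))} minimizes the Lagrangian g ↦ R(g) + λ·(ℙ(g(X,S)=1 | Y=1,S=1) − ℙ(g(X,S)=1 | Y=1,S=0)) over all classifiers g, and the minimum value equals ℙ(Y=1) − E_{X|S=1}[(b_1(2η(X,1)−1) − λ·η(X,1)/m_1)₊] − E_{X|S=0}[(b_0(2η(X,0)−1) + λ·η(X,0)/m_0)₊]. -/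

import Mathlib

/-!
By the regression identity, the risk of a classifier `g` and the two conditional probabilities
`ℙ(g = 1 | Y = 1, S = s)` are integrals of affine functions of `η` over the set where `g`
predicts `1`. Splitting by the group, the Lagrangian becomes
`ℙ(Y = 1) - ∑ₛ ∫_{S = s, g(X, s) = 1} G_s(X)` with the gain
`G_s(x) = η(x, s) (2 ∓ λ / ℙ(Y = 1, S = s)) - 1`. Each integral is at most `∫_{S = s} (G_s)₊`,
with equality exactly when `g` predicts `1` where `G_s ≥ 0`, which is `g*_λ`. Finally
`ℙ(Y = 1, S = s) = b_s m_s` turns `b_s G_s` into the integrands of the stated value.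
-/

open MeasureTheory ProbabilityTheory Set

open scoped symmDiff

section Regression

variable {Ω α : Type*} [MeasurableSpace Ω] [MeasurableSpace α]

def IsRegressionFunction (P : Measure Ω) (Y : Ω → Bool) (Z : Ω → α) (r : α → ℝ) : Prop :=
  ∀ φ : α → ℝ, Measurable φ → (∃ C, ∀ z, |φ z| ≤ C) →
    ∫ ω, (if Y ω then (1:ℝ) else 0) * φ (Z ω) ∂P = ∫ ω, r (Z ω) * φ (Z ω) ∂P

variable {P : Measure Ω} {Y : Ω → Bool} {Z : Ω → α} {r : α → ℝ}

namespace IsRegressionFunction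

variable (hreg : IsRegressionFunction P Y Z r) (hY : Measurable Y) (hZ : Measurable Z)
include hreg hY hZ

lemma measureReal_inter_preimage {B : Set α} (hB : MeasurableSet B) :
    P.real ({ω | Y ω = true} ∩ Z ⁻¹' B) = ∫ ω in Z ⁻¹' B, r (Z ω) ∂P := by
  have h := hreg (B.indicator 1) (measurable_one.indicator hB)
    ⟨1, fun z => by by_cases hz : z ∈ B <;> simp [hz]⟩
  have hT : MeasurableSet {ω | Y ω = true} := hY (measurableSet_singleton true)
  rw [← integral_indicator_one (hT.inter (hZ hB)),
    ← integral_indicator (hZ hB)]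
  refine (integral_congr_ae (ae_of_all _ fun ω => ?_)).trans
    (h.trans (integral_congr_ae (ae_of_all _ fun ω => ?_)))
  · by_cases hy : Y ω <;> by_cases hz : Z ω ∈ B <;> simp [indicator, hy, hz]
  · by_cases hz : Z ω ∈ B <;> simp [indicator, hz]

lemma measureReal_setOf_ne [IsFiniteMeasure P] (hr : Measurable r) (hr01 : ∀ z, r z ∈ Icc (0:ℝ) 1)
    {h : α → Bool} (hh : Measurable h) :
    P.real {ω | h (Z ω) ≠ Y ω}
      = P.real {ω | Y ω = true} + ∫ ω in Z ⁻¹' {z | h z = true}, (1 - 2 * r (Z ω)) ∂P := by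
  set G := Z ⁻¹' {z | h z = true}
  set T := {ω | Y ω = true}
  have hG : MeasurableSet G := hZ (hh (measurableSet_singleton true))
  have hT : MeasurableSet T := hY (measurableSet_singleton true)
  have hsymm : {ω | h (Z ω) ≠ Y ω} = G ∆ T := by
    ext ω
    simp only [G, T, mem_ofPred_eq, mem_preimage, mem_symmDiff]
    cases h (Z ω) <;> cases Y ω <;> simp
  have hint : Integrable (fun ω => r (Z ω)) (P.restrict G) :=
    .of_mem_Icc 0 1 (hr.comp hZ).aemeasurable (ae_of_all _ fun ω => hr01 (Z ω))
  have hTG : P.real (T ∩ G) = ∫ ω in G, r (Z ω) ∂P :=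
    hreg.measureReal_inter_preimage hY hZ (hh (measurableSet_singleton true))
  rw [hsymm, measureReal_symmDiff_eq hG hT, integral_sub (integrable_const 1) (hint.const_mul 2),
    integral_const_mul, setIntegral_const, smul_eq_mul, mul_one, ← hTG]
  have hGT := measureReal_inter_add_sdiff (μ := P) (s := G) hT
  have hTG' := measureReal_inter_add_sdiff (μ := P) (s := T) hG
  rw [inter_comm] at hGT
  linarith

lemma cond_preimage_toReal {A B : Set α} (hA : MeasurableSet A) (hB : MeasurableSet B) :
    (P[|{ω | Y ω = true} ∩ Z ⁻¹' A] (Z ⁻¹' B)).toReal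
      = (P.real ({ω | Y ω = true} ∩ Z ⁻¹' A))⁻¹ * ∫ ω in Z ⁻¹' A ∩ Z ⁻¹' B, r (Z ω) ∂P := by
  have hT : MeasurableSet {ω | Y ω = true} := hY (measurableSet_singleton true)
  rw [cond_apply (hT.inter (hZ hA)), ENNReal.toReal_mul,
    ENNReal.toReal_inv, inter_assoc, ← preimage_inter,
    ← hreg.measureReal_inter_preimage hY hZ (hA.inter hB)]
  rfl

end IsRegressionFunction

end Regression

lemma setOf_eq_inter_setOf_apply {Ω β : Type*} {S : Ω → β} {D : Ω → β → Prop} (b : β) :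
    {ω | S ω = b} ∩ {ω | D ω (S ω)} = {ω | S ω = b ∧ D ω b} := by
  ext ω
  simp only [mem_inter_iff, mem_ofPred_eq]
  exact ⟨fun h => ⟨h.1, h.1 ▸ h.2⟩, fun h => ⟨h.1, h.1.symm ▸ h.2⟩⟩

section Conditioning

variable {Ω : Type*} [MeasurableSpace Ω] {μ : Measure Ω}

lemma measureReal_mul_integral_cond [IsFiniteMeasure μ] (s : Set Ω) (f : Ω → ℝ) :
    μ.real s * ∫ ω, f ω ∂μ[|s] = ∫ ω in s, f ω ∂μ := by
  by_cases hs : μ s = 0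
  · simp [Measure.restrict_eq_zero.2 hs, measureReal_def, hs]
  rw [ProbabilityTheory.cond, integral_smul_measure, ENNReal.toReal_inv, smul_eq_mul, ← mul_assoc,
    measureReal_def, mul_inv_cancel₀ (ENNReal.toReal_ne_zero.2 ⟨hs, measure_ne_top μ s⟩), one_mul]

lemma setIntegral_eq_add_bool {S : Ω → Bool} (hS : Measurable S) {D : Ω → Bool → Prop}
    (hD : MeasurableSet {ω | D ω (S ω)}) {F : Ω → Bool → ℝ}
    (hF : IntegrableOn (fun ω => F ω (S ω)) {ω | D ω (S ω)} μ) :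
    ∫ ω in {ω | D ω (S ω)}, F ω (S ω) ∂μ
      = ∫ ω in {ω | S ω = true ∧ D ω true}, F ω true ∂μ
        + ∫ ω in {ω | S ω = false ∧ D ω false}, F ω false ∂μ := by
  have hT : MeasurableSet {ω | S ω = true} := hS (measurableSet_singleton true)
  have hcompl : {ω | S ω = true}ᶜ = {ω | S ω = false} := by ext; simp
  have h1 := setOf_eq_inter_setOf_apply (S := S) (D := D) true
  have h0 := setOf_eq_inter_setOf_apply (S := S) (D := D) false
  rw [← integral_inter_add_sdiff hT hF, sdiff_eq, hcompl, inter_comm, h1, inter_comm, h0]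
  congr 1
  · exact setIntegral_congr_fun (h1 ▸ hT.inter hD) fun ω hω => by rw [hω.1]
  · exact setIntegral_congr_fun (h0 ▸ (hS (measurableSet_singleton false)).inter hD)
      fun ω hω => by rw [hω.1]

end Conditioning

section PositivePart

variable {Ω : Type*} [MeasurableSpace Ω] {μ : Measure Ω} {f : Ω → ℝ} {s t : Set Ω}

lemma setIntegral_le_setIntegral_max_zero (hs : MeasurableSet s) (hst : s ⊆ t)
    (hf : IntegrableOn f t μ) :
    ∫ x in s, f x ∂μ ≤ ∫ x in t, max (f x) 0 ∂μ :=
  calc ∫ x in s, f x ∂μ ≤ ∫ x in s, max (f x) 0 ∂μ :=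
        setIntegral_mono_on (hf.mono_set hst) (hf.mono_set hst).pos_part hs
          fun _ _ => le_max_left _ _
    _ ≤ ∫ x in t, max (f x) 0 ∂μ :=
        setIntegral_mono_set hf.pos_part (ae_of_all _ fun _ => le_max_right _ _)
          (ae_of_all _ hst)

lemma setIntegral_inter_nonneg_eq (hf : Measurable f) :
    ∫ x in t ∩ {x | 0 ≤ f x}, f x ∂μ = ∫ x in t, max (f x) 0 ∂μ := by
  rw [← setIntegral_indicator (measurableSet_le measurable_const hf)]
  congr 1 with x
  by_cases hx : 0 ≤ f x
  · simp [hx]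
  · simp [hx, (not_le.1 hx).le]

end PositivePart

section FairClassification

variable {Ω E : Type*} [MeasurableSpace Ω] [MeasurableSpace E] {P : Measure Ω}
  {X : Ω → E} {S Y : Ω → Bool} {η : E → Bool → ℝ}

noncomputable def lagrangianGain (P : Measure Ω) (S Y : Ω → Bool) (η : E → Bool → ℝ) (lam : ℝ)
    (x : E) (s : Bool) : ℝ :=
  η x s * (2 - (if s then lam else -lam) / P.real {ω | Y ω = true ∧ S ω = s}) - 1

lemma measurable_lagrangianGain (hη : Measurable fun p : E × Bool => η p.1 p.2) (lam : ℝ)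
    (s : Bool) : Measurable fun x => lagrangianGain P S Y η lam x s :=
  ((hη.comp (measurable_id.prodMk measurable_const)).mul_const _).sub_const 1

lemma integrable_comp_of_mem_Icc [IsFiniteMeasure P] (hX : Measurable X)
    (hη : Measurable fun p : E × Bool => η p.1 p.2) (hη01 : ∀ x s, η x s ∈ Icc (0:ℝ) 1)
    (s : Bool) : Integrable (fun ω => η (X ω) s) P :=
  .of_mem_Icc 0 1 (hη.comp (hX.prodMk measurable_const)).aemeasurable
    (ae_of_all _ fun _ => hη01 _ _)

lemma integrable_lagrangianGain [IsFiniteMeasure P] (hX : Measurable X)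
    (hη : Measurable fun p : E × Bool => η p.1 p.2) (hη01 : ∀ x s, η x s ∈ Icc (0:ℝ) 1)
    (lam : ℝ) (s : Bool) : Integrable (fun ω => lagrangianGain P S Y η lam (X ω) s) P :=
  ((integrable_comp_of_mem_Icc hX hη hη01 s).mul_const _).sub (integrable_const 1)

lemma measureReal_Y_true_and_S_eq [IsFiniteMeasure P]
    (hreg : IsRegressionFunction P Y (fun ω => (X ω, S ω)) (fun p => η p.1 p.2))
    (hX : Measurable X) (hS : Measurable S) (hY : Measurable Y) (s : Bool) :
    P.real {ω | Y ω = true ∧ S ω = s}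
      = P.real {ω | S ω = s} * ∫ ω, η (X ω) s ∂P[|{ω | S ω = s}] := by
  rw [measureReal_mul_integral_cond]
  refine (hreg.measureReal_inter_preimage hY (hX.prodMk hS)
    (measurable_snd (measurableSet_singleton s))).trans ?_
  exact setIntegral_congr_fun (hS (measurableSet_singleton s)) fun ω hω => by
    rw [show S ω = s from hω]

lemma measureReal_setOf_ne_eq_groups [IsFiniteMeasure P]
    (hreg : IsRegressionFunction P Y (fun ω => (X ω, S ω)) (fun p => η p.1 p.2))
    (hX : Measurable X) (hS : Measurable S) (hY : Measurable Y)
    (hη : Measurable fun p : E × Bool => η p.1 p.2) (hη01 : ∀ x s, η x s ∈ Icc (0:ℝ) 1)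
    {g : E → Bool → Bool} (hg : Measurable fun p : E × Bool => g p.1 p.2) :
    P.real {ω | g (X ω) (S ω) ≠ Y ω} = P.real {ω | Y ω = true}
      + ∫ ω in {ω | S ω = true ∧ g (X ω) true = true}, (1 - 2 * η (X ω) true) ∂P
      + ∫ ω in {ω | S ω = false ∧ g (X ω) false = true}, (1 - 2 * η (X ω) false) ∂P := by
  have hZ : Measurable fun ω => (X ω, S ω) := hX.prodMk hS
  have hint : Integrable (fun ω => η (X ω) (S ω)) P :=
    .of_mem_Icc 0 1 (hη.comp hZ).aemeasurable (ae_of_all _ fun _ => hη01 _ _)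
  rw [add_assoc,
    hreg.measureReal_setOf_ne hY hZ hη (fun z => hη01 z.1 z.2) (h := fun p => g p.1 p.2) hg]
  congr 1
  exact setIntegral_eq_add_bool hS (D := fun ω s => g (X ω) s = true)
    (F := fun ω s => 1 - 2 * η (X ω) s) (hZ (hg (measurableSet_singleton true)))
    ((integrable_const 1).sub (hint.const_mul 2)).integrableOn

lemma cond_classifier_toReal
    (hreg : IsRegressionFunction P Y (fun ω => (X ω, S ω)) (fun p => η p.1 p.2))
    (hX : Measurable X) (hS : Measurable S) (hY : Measurable Y)
    {g : E → Bool → Bool} (hg : Measurable fun p : E × Bool => g p.1 p.2) (s : Bool) :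
    (P[|{ω | Y ω = true ∧ S ω = s}] {ω | g (X ω) (S ω) = true}).toReal
      = (P.real {ω | Y ω = true ∧ S ω = s})⁻¹
        * ∫ ω in {ω | S ω = s ∧ g (X ω) s = true}, η (X ω) s ∂P := by
  have hZ : Measurable fun ω => (X ω, S ω) := hX.prodMk hS
  have hgroup := setOf_eq_inter_setOf_apply (S := S) (D := fun ω s => g (X ω) s = true) s
  have h : (P[|{ω | Y ω = true ∧ S ω = s}] {ω | g (X ω) (S ω) = true}).toReal
      = (P.real {ω | Y ω = true ∧ S ω = s})⁻¹
        * ∫ ω in {ω | S ω = s} ∩ {ω | g (X ω) (S ω) = true}, η (X ω) (S ω) ∂P :=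
    hreg.cond_preimage_toReal hY hZ (A := {p | p.2 = s}) (B := {p | g p.1 p.2 = true})
      (measurable_snd (measurableSet_singleton s)) (hg (measurableSet_singleton true))
  have hG : MeasurableSet {ω | S ω = s ∧ g (X ω) s = true} :=
    hgroup ▸ (hS (measurableSet_singleton s)).inter (hZ (hg (measurableSet_singleton true)))
  rw [hgroup] at h
  refine h.trans (congrArg _ (setIntegral_congr_fun hG fun ω hω => ?_))
  simp only [hω.1]

lemma lagrangian_eq [IsFiniteMeasure P]
    (hreg : IsRegressionFunction P Y (fun ω => (X ω, S ω)) (fun p => η p.1 p.2))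
    (hX : Measurable X) (hS : Measurable S) (hY : Measurable Y)
    (hη : Measurable fun p : E × Bool => η p.1 p.2) (hη01 : ∀ x s, η x s ∈ Icc (0:ℝ) 1)
    (lam : ℝ) {g : E → Bool → Bool} (hg : Measurable fun p : E × Bool => g p.1 p.2) :
    (P {ω | g (X ω) (S ω) ≠ Y ω}).toReal
        + lam * ((P[|{ω | Y ω = true ∧ S ω = true}] {ω | g (X ω) (S ω) = true}).toReal
          - (P[|{ω | Y ω = true ∧ S ω = false}] {ω | g (X ω) (S ω) = true}).toReal)
      = P.real {ω | Y ω = true}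
        - ∫ ω in {ω | S ω = true ∧ g (X ω) true = true}, lagrangianGain P S Y η lam (X ω) true ∂P
        - ∫ ω in {ω | S ω = false ∧ g (X ω) false = true},
            lagrangianGain P S Y η lam (X ω) false ∂P := by
  have hint := integrable_comp_of_mem_Icc (P := P) hX hη hη01
  -- every term is affine in the group integrals of `η (X ω) s` and the group masses
  have hgain : ∀ s (k : ℝ), ∫ ω in {ω | S ω = s ∧ g (X ω) s = true}, (η (X ω) s * k - 1) ∂P
      = k * ∫ ω in {ω | S ω = s ∧ g (X ω) s = true}, η (X ω) s ∂P
        - P.real {ω | S ω = s ∧ g (X ω) s = true} := by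
    intro s k
    rw [integral_sub ((hint s).mul_const k).integrableOn (integrable_const 1),
      integral_mul_const, setIntegral_const, smul_eq_mul, mul_one, mul_comm]
  have hmiss : ∀ s, ∫ ω in {ω | S ω = s ∧ g (X ω) s = true}, (1 - 2 * η (X ω) s) ∂P
      = P.real {ω | S ω = s ∧ g (X ω) s = true}
        - 2 * ∫ ω in {ω | S ω = s ∧ g (X ω) s = true}, η (X ω) s ∂P := by
    intro s
    rw [integral_sub (integrable_const 1) ((hint s).const_mul 2).integrableOn,
      integral_const_mul, setIntegral_const, smul_eq_mul, mul_one]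
  rw [← measureReal_def, measureReal_setOf_ne_eq_groups hreg hX hS hY hη hη01 hg, hmiss, hmiss,
    cond_classifier_toReal hreg hX hS hY hg, cond_classifier_toReal hreg hX hS hY hg]
  simp only [lagrangianGain, if_true, Bool.false_eq_true, if_false]
  rw [hgain, hgain]
  ring

lemma setIntegral_lagrangianGain_le [IsFiniteMeasure P] (hX : Measurable X) (hS : Measurable S)
    (hη : Measurable fun p : E × Bool => η p.1 p.2) (hη01 : ∀ x s, η x s ∈ Icc (0:ℝ) 1)
    (lam : ℝ) {g : E → Bool → Bool} (hg : Measurable fun p : E × Bool => g p.1 p.2) (s : Bool) :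
    ∫ ω in {ω | S ω = s ∧ g (X ω) s = true}, lagrangianGain P S Y η lam (X ω) s ∂P
      ≤ ∫ ω in {ω | S ω = s}, max (lagrangianGain P S Y η lam (X ω) s) 0 ∂P :=
  setIntegral_le_setIntegral_max_zero (t := {ω | S ω = s})
    ((hS (measurableSet_singleton s)).inter
      (hX (hg.comp (measurable_id.prodMk measurable_const) (measurableSet_singleton true))))
    (fun _ hω => hω.1) (integrable_lagrangianGain hX hη hη01 lam s).integrableOn

lemma setIntegral_lagrangianGain_of_iff (hX : Measurable X)
    (hη : Measurable fun p : E × Bool => η p.1 p.2) (lam : ℝ) {g : E → Bool → Bool} (s : Bool)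
    (hg : ∀ x, g x s = true ↔ 0 ≤ lagrangianGain P S Y η lam x s) :
    ∫ ω in {ω | S ω = s ∧ g (X ω) s = true}, lagrangianGain P S Y η lam (X ω) s ∂P
      = ∫ ω in {ω | S ω = s}, max (lagrangianGain P S Y η lam (X ω) s) 0 ∂P := by
  rw [← setIntegral_inter_nonneg_eq (f := fun ω => lagrangianGain P S Y η lam (X ω) s)
    ((measurable_lagrangianGain hη lam s).comp hX)]
  simp only [← ofPred_and, hg]

lemma mul_max_gain_eq {b m c e : ℝ} (hb : 0 < b) :
    b * max (e * (2 - c / (b * m)) - 1) 0 = max (b * (2 * e - 1) - c * e / m) 0 := by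
  rw [mul_max_of_nonneg _ _ hb.le, mul_zero, div_mul_eq_div_div_swap]
  congr 1
  field_simp
  ring

lemma setIntegral_max_lagrangianGain [IsFiniteMeasure P]
    (hreg : IsRegressionFunction P Y (fun ω => (X ω, S ω)) (fun p => η p.1 p.2))
    (hX : Measurable X) (hS : Measurable S) (hY : Measurable Y) (lam : ℝ) (s : Bool)
    (hs : 0 < P {ω | Y ω = true ∧ S ω = s}) :
    ∫ ω in {ω | S ω = s}, max (lagrangianGain P S Y η lam (X ω) s) 0 ∂P
      = ∫ ω, max (P.real {ω | S ω = s} * (2 * η (X ω) s - 1)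
          - (if s then lam else -lam) * η (X ω) s / ∫ ω, η (X ω) s ∂P[|{ω | S ω = s}]) 0
        ∂P[|{ω | S ω = s}] := by
  have hb : 0 < P.real {ω | S ω = s} :=
    ENNReal.toReal_pos (hs.trans_le (measure_mono fun ω hω => hω.2)).ne' (measure_ne_top _ _)
  rw [← measureReal_mul_integral_cond, ← integral_const_mul]
  refine integral_congr_ae (ae_of_all _ fun ω => ?_)
  simp only [lagrangianGain, measureReal_Y_true_and_S_eq hreg hX hS hY s]
  exact mul_max_gain_eq hb

end FairClassification

theorem stmt_16_general {d : ℕ} {Ω : Type*} [MeasurableSpace Ω]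
    (P : Measure Ω) [IsProbabilityMeasure P]
    (X : Ω → (Fin d → ℝ)) (S Y : Ω → Bool)
    (hX : Measurable X) (hS : Measurable S) (hY : Measurable Y)
    (hYS : ∀ s : Bool, 0 < P {ω | Y ω = true ∧ S ω = s})
    (η : (Fin d → ℝ) → Bool → ℝ)
    (hηm : Measurable (fun p : (Fin d → ℝ) × Bool => η p.1 p.2))
    (hη01 : ∀ x s, η x s ∈ Icc (0:ℝ) 1)
    (hreg : ∀ φ : (Fin d → ℝ) × Bool → ℝ, Measurable φ → (∃ C, ∀ z, |φ z| ≤ C) →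
      ∫ ω, (if Y ω then (1:ℝ) else 0) * φ (X ω, S ω) ∂P
        = ∫ ω, η (X ω) (S ω) * φ (X ω, S ω) ∂P)
    (b1 b0 m1 m0 : ℝ)
    (hb1 : b1 = (P {ω | S ω = true}).toReal)
    (hb0 : b0 = (P {ω | S ω = false}).toReal)
    (hm1 : m1 = ∫ ω, η (X ω) true ∂(ProbabilityTheory.cond P {ω | S ω = true}))
    (hm0 : m0 = ∫ ω, η (X ω) false ∂(ProbabilityTheory.cond P {ω | S ω = false}))
    -- the Lagrangian
    (lam : ℝ)
    (L : ((Fin d → ℝ) → Bool → Bool) → ℝ)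
    (hL : ∀ g, L g = (P {ω | g (X ω) (S ω) ≠ Y ω}).toReal
      + lam * ((ProbabilityTheory.cond P {ω | Y ω = true ∧ S ω = true}
            {ω | g (X ω) (S ω) = true}).toReal
        - (ProbabilityTheory.cond P {ω | Y ω = true ∧ S ω = false}
            {ω | g (X ω) (S ω) = true}).toReal))
    -- the thresholded classifier g*_λ
    (glam : (Fin d → ℝ) → Bool → Bool)
    (hglam1 : ∀ x, glam x true = true
      ↔ 1 ≤ η x true * (2 - lam / (P {ω | Y ω = true ∧ S ω = true}).toReal))
    (hglam0 : ∀ x, glam x false = true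
      ↔ 1 ≤ η x false * (2 + lam / (P {ω | Y ω = true ∧ S ω = false}).toReal)) :
    (∀ g : (Fin d → ℝ) → Bool → Bool,
        Measurable (fun p : (Fin d → ℝ) × Bool => g p.1 p.2) → L glam ≤ L g)
    ∧ L glam = (P {ω | Y ω = true}).toReal
        - (∫ ω, max (b1 * (2 * η (X ω) true - 1) - lam * η (X ω) true / m1) 0
            ∂(ProbabilityTheory.cond P {ω | S ω = true}))
        - (∫ ω, max (b0 * (2 * η (X ω) false - 1) + lam * η (X ω) false / m0) 0
            ∂(ProbabilityTheory.cond P {ω | S ω = false})) := by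
  have hglam : ∀ s x, glam x s = true ↔ 0 ≤ lagrangianGain P S Y η lam x s := by
    rintro (_ | _) x
    · simpa [lagrangianGain, measureReal_def, neg_div, sub_nonneg] using hglam0 x
    · simpa [lagrangianGain, measureReal_def, sub_nonneg] using hglam1 x
  have hglam_meas : Measurable fun p : (Fin d → ℝ) × Bool => glam p.1 p.2 :=
    measurable_from_prod_countable_left fun s => measurable_to_bool <| by
      simpa only [preimage, mem_singleton_iff, hglam] using
        measurableSet_le measurable_const (measurable_lagrangianGain hηm lam s)
  have hopt : L glam = P.real {ω | Y ω = true}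
      - ∫ ω in {ω | S ω = true}, max (lagrangianGain P S Y η lam (X ω) true) 0 ∂P
      - ∫ ω in {ω | S ω = false}, max (lagrangianGain P S Y η lam (X ω) false) 0 ∂P := by
    rw [hL, lagrangian_eq hreg hX hS hY hηm hη01 lam hglam_meas,
      setIntegral_lagrangianGain_of_iff hX hηm lam true (hglam true),
      setIntegral_lagrangianGain_of_iff hX hηm lam false (hglam false)]
  refine ⟨fun g hg => ?_, ?_⟩
  · rw [hopt, hL, lagrangian_eq hreg hX hS hY hηm hη01 lam hg]
    linarith [setIntegral_lagrangianGain_le (P := P) (Y := Y) hX hS hηm hη01 lam hg true,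
      setIntegral_lagrangianGain_le (P := P) (Y := Y) hX hS hηm hη01 lam hg false]
  · rw [hopt, setIntegral_max_lagrangianGain hreg hX hS hY lam true (hYS true),
      setIntegral_max_lagrangianGain hreg hX hS hY lam false (hYS false), hb1, hb0, hm1, hm0]
    simp only [if_true, Bool.false_eq_true, if_false, neg_mul, neg_div, sub_neg_eq_add]
    rfl

theorem stmt_16 {d : ℕ} {Ω : Type*} [MeasurableSpace Ω]
    (P : Measure Ω) [IsProbabilityMeasure P]
    (X : Ω → (Fin d → ℝ)) (S Y : Ω → Bool)
    (hX : Measurable X) (hS : Measurable S) (hY : Measurable Y)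
    (hSnd : 0 < P {ω | S ω = true} ∧ P {ω | S ω = true} < 1)
    (hYnd : 0 < P {ω | Y ω = true} ∧ P {ω | Y ω = true} < 1)
    (hYS : ∀ s : Bool, 0 < P {ω | Y ω = true ∧ S ω = s})
    (η : (Fin d → ℝ) → Bool → ℝ)
    (hηm : Measurable (fun p : (Fin d → ℝ) × Bool => η p.1 p.2))
    (hη01 : ∀ x s, η x s ∈ Icc (0:ℝ) 1)
    (hreg : ∀ φ : (Fin d → ℝ) × Bool → ℝ, Measurable φ → (∃ C, ∀ z, |φ z| ≤ C) →
      ∫ ω, (if Y ω then (1:ℝ) else 0) * φ (X ω, S ω) ∂P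
        = ∫ ω, η (X ω) (S ω) * φ (X ω, S ω) ∂P)
    (b1 b0 m1 m0 : ℝ)
    (hb1 : b1 = (P {ω | S ω = true}).toReal)
    (hb0 : b0 = (P {ω | S ω = false}).toReal)
    (hm1 : m1 = ∫ ω, η (X ω) true ∂(ProbabilityTheory.cond P {ω | S ω = true}))
    (hm0 : m0 = ∫ ω, η (X ω) false ∂(ProbabilityTheory.cond P {ω | S ω = false}))
    -- the Lagrangian
    (lam : ℝ)
    (L : ((Fin d → ℝ) → Bool → Bool) → ℝ)
    (hL : ∀ g, L g = (P {ω | g (X ω) (S ω) ≠ Y ω}).toReal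
      + lam * ((ProbabilityTheory.cond P {ω | Y ω = true ∧ S ω = true}
            {ω | g (X ω) (S ω) = true}).toReal
        - (ProbabilityTheory.cond P {ω | Y ω = true ∧ S ω = false}
            {ω | g (X ω) (S ω) = true}).toReal))
    -- the thresholded classifier g*_λ
    (glam : (Fin d → ℝ) → Bool → Bool)
    (hglam1 : ∀ x, glam x true = true
      ↔ 1 ≤ η x true * (2 - lam / (P {ω | Y ω = true ∧ S ω = true}).toReal))
    (hglam0 : ∀ x, glam x false = true
      ↔ 1 ≤ η x false * (2 + lam / (P {ω | Y ω = true ∧ S ω = false}).toReal)) :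
    (∀ g : (Fin d → ℝ) → Bool → Bool,
        Measurable (fun p : (Fin d → ℝ) × Bool => g p.1 p.2) → L glam ≤ L g)
    ∧ L glam = (P {ω | Y ω = true}).toReal
        - (∫ ω, max (b1 * (2 * η (X ω) true - 1) - lam * η (X ω) true / m1) 0
            ∂(ProbabilityTheory.cond P {ω | S ω = true}))
        - (∫ ω, max (b0 * (2 * η (X ω) false - 1) + lam * η (X ω) false / m0) 0
            ∂(ProbabilityTheory.cond P {ω | S ω = false})) :=
  stmt_16_general P X S Y hX hS hY hYS η hηm hη01 hreg b1 b0 m1 m0 hb1 hb0 hm1 hm0 lam L hL glam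
    hglam1 hglam0
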